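/- arXiv:1907.13243 — 4 statements merged into one kernel-verified Lean document; each statement's English description precedes it below -/
import Mathlib

section
/- There exists α_0 ∈ (0, π/4] such that for every α ∈ (0, α_0] the constant c(α) := 10 sin(2α) − 10 sin(3α)/cos(α) + 5 sin(4α)/cos(α)^2 − sin(5α)/cos(α)^3 is strictly positive, the function u ↦ 10 sin(2α) − 10 u sin(3α) + 5 u^2 sin(4α) − u^3 sin(5α) is monotonically decreasing on [0, 1/cos(α)], and consequently 10 sin(2α) − 10 u sin(3α) + 5 u^2 sin(4α) − u^3 sin(5α) ≥ c(α) for all u ∈ [0, 1/cos(α)]. In particular, for z = z_0 + u z_0 e^{i(π−α)} with z_0 > 0 and u ∈ [0, 1/cos(α)], one has Re(i θ(z)) ≥ 16 c(α) z_0^5 u^2. -/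
/-- The phase function `θ(z) = 16 z^5 − 80 z₀^4 z`. -/
noncomputable def theta (z₀ : ℝ) (z : ℂ) : ℂ := 16 * z ^ 5 - 80 * (z₀ : ℂ) ^ 4 * z

/-- The constant `c(α) = 10 sin 2α − 10 sin 3α / cos α + 5 sin 4α / cos² α − sin 5α / cos³ α`. -/
noncomputable def cα (α : ℝ) : ℝ :=
  10 * Real.sin (2 * α) - 10 * Real.sin (3 * α) / Real.cos α
    + 5 * Real.sin (4 * α) / Real.cos α ^ 2 - Real.sin (5 * α) / Real.cos α ^ 3

/-!
Write the point on the ray as `z₀ (1 + ζ)` with `ζ = u e^{i(π−α)}`. Then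
`θ = 16 z₀⁵ (10ζ² + 10ζ³ + 5ζ⁴ + ζ⁵ − 4)`, and de Moivre turns `Re(iθ) = −Im θ` into
`16 z₀⁵ u² p_α(u)`, where `p_α` is the cubic of the statement.

The divided difference `(p_α(u) − p_α(v)) / (v − u)` equals
`10 sin 3α − 5 (u + v) sin 4α + (u² + uv + v²) sin 5α ≥ α (30 − 20 s + (15/4) s²) + O(α³)`
with `s = u + v`; this quadratic in `s` has negative discriminant, so `p_α` decreases on `[0, ∞)`
and its minimum on `[0, 1/cos α]` is `p_α(1/cos α) = c(α)`. Finally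
`cos³α · c(α) = (20 − 30 + 20 − 5) α + O(α³) > 0`.
-/

open Real Complex

noncomputable def phaseCubic (α u : ℝ) : ℝ :=
  10 * Real.sin (2 * α) - 10 * u * Real.sin (3 * α)
    + 5 * u ^ 2 * Real.sin (4 * α) - u ^ 3 * Real.sin (5 * α)

theorem phaseCubic_one_div_cos (α : ℝ) : phaseCubic α (1 / Real.cos α) = cα α := by
  simp only [phaseCubic, cα]; ring

theorem im_exp_I_pi_sub_pow (α : ℝ) (n : ℕ) :
    (exp (I * (π - α)) ^ n).im = -((-1) ^ n * Real.sin (n * α)) := by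
  rw [← Complex.exp_nat_mul, show (n : ℂ) * (I * (π - α)) = ((n * π - n * α : ℝ) : ℂ) * I by
    push_cast; ring, exp_ofReal_mul_I_im, sin_nat_mul_pi_sub]

theorem re_I_mul_theta_ray (α z₀ u : ℝ) :
    (I * theta z₀ (z₀ + u * z₀ * exp (I * (π - α)))).re =
      16 * z₀ ^ 5 * u ^ 2 * phaseCubic α u := by
  set e := exp (I * (π - α))
  have hθ : theta z₀ (z₀ + u * z₀ * e) = ((16 * z₀ ^ 5 : ℝ) : ℂ) *
      (((10 * u ^ 2 : ℝ) : ℂ) * e ^ 2 + ((10 * u ^ 3 : ℝ) : ℂ) * e ^ 3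
        + ((5 * u ^ 4 : ℝ) : ℂ) * e ^ 4 + ((u ^ 5 : ℝ) : ℂ) * e ^ 5 - ((4 : ℝ) : ℂ)) := by
    simp only [theta]; push_cast; ring
  simp only [hθ, I_mul_re, im_ofReal_mul, add_im, sub_im, ofReal_im, e, im_exp_I_pi_sub_pow,
    phaseCubic]
  push_cast
  ring

theorem phaseCubic_sub_phaseCubic (α u v : ℝ) :
    phaseCubic α u - phaseCubic α v = (v - u) * (10 * Real.sin (3 * α)
      - 5 * (u + v) * Real.sin (4 * α) + (u ^ 2 + u * v + v ^ 2) * Real.sin (5 * α)) := by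
  simp only [phaseCubic]; ring

theorem phaseCubic_slope_nonneg {α u v : ℝ} (h0 : 0 < α) (h1 : α ≤ 1 / 10) (hu : 0 ≤ u)
    (hv : 0 ≤ v) : 0 ≤ 10 * Real.sin (3 * α) - 5 * (u + v) * Real.sin (4 * α)
      + (u ^ 2 + u * v + v ^ 2) * Real.sin (5 * α) := by
  have hα : α ^ 3 ≤ α / 100 := by nlinarith [mul_le_mul h1 h1 h0.le (by norm_num)]
  have hs3 : 2955 / 1000 * α ≤ Real.sin (3 * α) := by
    nlinarith [sin_gt_sub_cube (show 0 < 3 * α by positivity)]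
  have hs4 : Real.sin (4 * α) ≤ 4 * α := sin_le (by positivity)
  have hs5 : 479 / 100 * α ≤ Real.sin (5 * α) := by
    nlinarith [sin_gt_sub_cube (show 0 < 5 * α by positivity)]
  have hq : 3 / 4 * (u + v) ^ 2 ≤ u ^ 2 + u * v + v ^ 2 := by nlinarith [sq_nonneg (u - v)]
  nlinarith [mul_le_mul_of_nonneg_left hs4 (add_nonneg hu hv),
    mul_le_mul_of_nonneg_right hq (le_trans (by positivity) hs5),
    mul_le_mul_of_nonneg_left hs5 (by positivity : (0 : ℝ) ≤ 3 / 4 * (u + v) ^ 2),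
    -- `139 / 50` is the vertex of `29.55 − 20 s + 3.5925 s²`, the lower bound produced above
    mul_nonneg h0.le (sq_nonneg (u + v - 139 / 50))]

theorem antitoneOn_phaseCubic {α : ℝ} (h0 : 0 < α) (h1 : α ≤ 1 / 10) :
    AntitoneOn (phaseCubic α) (Set.Ici 0) := by
  intro u hu v hv huv
  rw [← sub_nonneg, phaseCubic_sub_phaseCubic]
  exact mul_nonneg (sub_nonneg.2 huv) (phaseCubic_slope_nonneg h0 h1 hu hv)

theorem cα_pos {α : ℝ} (h0 : 0 < α) (h1 : α ≤ 1 / 10) : 0 < cα α := by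
  have hα : α ^ 3 ≤ α / 100 := by nlinarith [mul_le_mul h1 h1 h0.le (by norm_num)]
  have hc : 995 / 1000 ≤ Real.cos α := by nlinarith [one_sub_sq_div_two_le_cos (x := α)]
  have hc2 : Real.cos α ^ 2 ≤ 1 := by nlinarith [cos_le_one α]
  have hc3 : 985 / 1000 ≤ Real.cos α ^ 3 := by
    nlinarith [pow_le_pow_left₀ (by norm_num) hc 3]
  have hs2 : 198 / 100 * α ≤ Real.sin (2 * α) := by
    nlinarith [sin_gt_sub_cube (show 0 < 2 * α by positivity)]
  have hs3 : Real.sin (3 * α) ≤ 3 * α := sin_le (by positivity)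
  have hs3_nonneg : 0 ≤ Real.sin (3 * α) :=
    sin_nonneg_of_nonneg_of_le_pi (by positivity) (by linarith [pi_gt_three])
  have hs4 : 389 / 100 * α ≤ Real.sin (4 * α) := by
    nlinarith [sin_gt_sub_cube (show 0 < 4 * α by positivity)]
  have hs5 : Real.sin (5 * α) ≤ 5 * α := sin_le (by positivity)
  have hnum : Real.cos α ^ 3 * cα α = 10 * Real.cos α ^ 3 * Real.sin (2 * α)
      - 10 * Real.cos α ^ 2 * Real.sin (3 * α) + 5 * Real.cos α * Real.sin (4 * α)
      - Real.sin (5 * α) := by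
    rw [cα]; field_simp
  refine pos_of_mul_pos_right ?_ (by positivity : 0 ≤ Real.cos α ^ 3)
  rw [hnum]
  nlinarith [mul_le_mul hc3 hs2 (by positivity) (by linarith),
    mul_le_mul hc2 hs3 hs3_nonneg zero_le_one, mul_le_mul hc hs4 (by positivity) (by linarith)]

/-- For all sufficiently small `α > 0`, the constant `c(α)` is positive, the polynomial
`u ↦ 10 sin 2α − 10 u sin 3α + 5 u² sin 4α − u³ sin 5α` is monotonically decreasing on
`[0, 1/cos α]` and bounded below there by `c(α)`; consequently, on the ray
`z = z₀ + u z₀ e^{i(π−α)}` one has `Re(iθ(z)) ≥ 16 c(α) z₀^5 u²`. -/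
theorem c_alpha_positive_and_lower_bound :
    ∃ α₀ ∈ Set.Ioc (0 : ℝ) (Real.pi / 4), ∀ α ∈ Set.Ioc (0 : ℝ) α₀,
      0 < cα α ∧
      AntitoneOn
        (fun u : ℝ => 10 * Real.sin (2 * α) - 10 * u * Real.sin (3 * α)
          + 5 * u ^ 2 * Real.sin (4 * α) - u ^ 3 * Real.sin (5 * α))
        (Set.Icc 0 (1 / Real.cos α)) ∧
      (∀ u ∈ Set.Icc (0 : ℝ) (1 / Real.cos α),
        10 * Real.sin (2 * α) - 10 * u * Real.sin (3 * α)
          + 5 * u ^ 2 * Real.sin (4 * α) - u ^ 3 * Real.sin (5 * α) ≥ cα α) ∧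
      ∀ z₀ : ℝ, 0 < z₀ → ∀ u ∈ Set.Icc (0 : ℝ) (1 / Real.cos α),
        (Complex.I *
            theta z₀ ((z₀ : ℂ) + (u : ℂ) * (z₀ : ℂ) *
              Complex.exp (Complex.I * ((Real.pi : ℂ) - (α : ℂ))))).re
          ≥ 16 * cα α * z₀ ^ 5 * u ^ 2 := by
  refine ⟨1 / 10, ⟨by norm_num, by linarith [pi_gt_three]⟩, ?_⟩
  rintro α ⟨h0, h1⟩
  have hanti : AntitoneOn (phaseCubic α) (Set.Icc 0 (1 / Real.cos α)) :=
    (antitoneOn_phaseCubic h0 h1).mono Set.Icc_subset_Ici_self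
  have hlow : ∀ u ∈ Set.Icc (0 : ℝ) (1 / Real.cos α), cα α ≤ phaseCubic α u := fun u hu =>
    phaseCubic_one_div_cos α ▸ hanti hu ⟨hu.1.trans hu.2, le_rfl⟩ hu.2
  refine ⟨cα_pos h0 h1, hanti, hlow, fun z₀ hz₀ u hu => ?_⟩
  rw [ge_iff_le, re_I_mul_theta_ray]
  linarith [mul_le_mul_of_nonneg_left (hlow u hu) (by positivity : 0 ≤ 16 * z₀ ^ 5 * u ^ 2)]
end

section
/- Let z_0 > 0, α ∈ (0, π/5) and v ≥ 0, and set z = z_0 + v z_0 e^{−iα}. Then Re(i θ(z)) = 160 z_0^5 v^2 ( sin(2α) + v sin(3α) + (1/2) v^2 sin(4α) + (1/10) v^3 sin(5α) ), and in particular Re(i θ(z)) ≥ 160 sin(2α) z_0^5 v^2 ≥ 0. -/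
open Complex

-- The constant term is written with `w ^ 0` so that every term is of the form
-- `c * w ^ k` treated by `re_I_mul_ofReal_mul_exp_neg_I_mul_pow`.
lemma theta_conj_ray_expand (z₀ v : ℝ) (w : ℂ) :
    theta z₀ (z₀ + v * z₀ * w) =
      ((-64 * z₀ ^ 5 : ℝ) : ℂ) * w ^ 0 + ((160 * z₀ ^ 5 * v ^ 2 : ℝ) : ℂ) * w ^ 2
        + ((160 * z₀ ^ 5 * v ^ 3 : ℝ) : ℂ) * w ^ 3 + ((80 * z₀ ^ 5 * v ^ 4 : ℝ) : ℂ) * w ^ 4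
        + ((16 * z₀ ^ 5 * v ^ 5 : ℝ) : ℂ) * w ^ 5 := by
  simp only [theta]
  push_cast
  ring

lemma re_I_mul_ofReal_mul_exp_neg_I_mul_pow (c α : ℝ) (k : ℕ) :
    (I * ((c : ℂ) * exp (-I * α) ^ k)).re = c * Real.sin (k * α) := by
  rw [← Complex.exp_nat_mul, show (k : ℂ) * (-I * α) = ((-(k * α) : ℝ) : ℂ) * I by
    push_cast; ring, I_mul_re, im_ofReal_mul, exp_ofReal_mul_I_im, Real.sin_neg]
  ring

lemma re_I_mul_theta_conj_ray (z₀ α v : ℝ) :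
    (I * theta z₀ (z₀ + v * z₀ * exp (-I * α))).re =
      160 * z₀ ^ 5 * v ^ 2 * (Real.sin (2 * α) + v * Real.sin (3 * α)
        + (1 / 2) * v ^ 2 * Real.sin (4 * α) + (1 / 10) * v ^ 3 * Real.sin (5 * α)) := by
  simp only [theta_conj_ray_expand, mul_add, add_re, re_I_mul_ofReal_mul_exp_neg_I_mul_pow,
    Nat.cast_ofNat, CharP.cast_eq_zero, zero_mul, Real.sin_zero]
  ring

/-- On the ray `z = z₀ + v z₀ e^{−iα}` with `α ∈ (0, π/5)` and `v ≥ 0`, one has the exact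
identity `Re(iθ(z)) = 160 z₀^5 v² (sin 2α + v sin 3α + (1/2) v² sin 4α + (1/10) v³ sin 5α)`,
and in particular `Re(iθ(z)) ≥ 160 sin(2α) z₀^5 v² ≥ 0`. -/
theorem re_I_theta_on_conjugate_ray (z₀ : ℝ) (hz₀ : 0 < z₀) (α : ℝ)
    (hα : α ∈ Set.Ioo 0 (Real.pi / 5)) (v : ℝ) (hv : 0 ≤ v) :
    (Complex.I *
        theta z₀ ((z₀ : ℂ) + (v : ℂ) * (z₀ : ℂ) * Complex.exp (-Complex.I * (α : ℂ)))).re =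
      160 * z₀ ^ 5 * v ^ 2 *
        (Real.sin (2 * α) + v * Real.sin (3 * α) + (1 / 2) * v ^ 2 * Real.sin (4 * α)
          + (1 / 10) * v ^ 3 * Real.sin (5 * α)) ∧
    (Complex.I *
        theta z₀ ((z₀ : ℂ) + (v : ℂ) * (z₀ : ℂ) * Complex.exp (-Complex.I * (α : ℂ)))).re ≥
      160 * Real.sin (2 * α) * z₀ ^ 5 * v ^ 2 ∧
    (0 : ℝ) ≤ 160 * Real.sin (2 * α) * z₀ ^ 5 * v ^ 2 := by
  obtain ⟨hα₀, hα₅⟩ := hα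
  have hsin : ∀ k : ℝ, 0 ≤ k → k ≤ 5 → 0 ≤ Real.sin (k * α) := fun k hk₀ hk₅ =>
    Real.sin_nonneg_of_nonneg_of_le_pi (by positivity) (by nlinarith)
  have hsin₂ := hsin 2 (by norm_num) (by norm_num)
  have hsin₃ := hsin 3 (by norm_num) (by norm_num)
  have hsin₄ := hsin 4 (by norm_num) (by norm_num)
  have hsin₅ := hsin 5 (by norm_num) (by norm_num)
  refine ⟨re_I_mul_theta_conj_ray z₀ α v, ?_, by positivity⟩
  rw [re_I_mul_theta_conj_ray, ge_iff_le, show 160 * Real.sin (2 * α) * z₀ ^ 5 * v ^ 2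
    = 160 * z₀ ^ 5 * v ^ 2 * Real.sin (2 * α) by ring]
  refine mul_le_mul_of_nonneg_left ?_ (by positivity)
  linarith [mul_nonneg hv hsin₃, mul_nonneg (sq_nonneg v) hsin₄,
    mul_nonneg (pow_nonneg hv 3) hsin₅]
end

section
/- Let ν > 0, α ∈ (0, π/2), γ ∈ (0, 1/2), ε ∈ (0, 1), z_0 > 0, t > 0 and a = (640 t z_0^3)^{1/2}. Then there is a constant C depending only on ν, α, γ, ε and z_0 such that for every u ≥ −ε, with z = u z_0 a e^{iα} and using the principal branch of the complex power: | e^{i γ z^2/2} ( (2z_0/(z/a + 2z_0))^{−2iν} − 1 ) | ≤ C t^{−1/2}. -/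
/-!
After cancelling `z₀ a`, the base of the power is `w = 2 / (u e^{iα} + 2)`, independent of `t`,
and `cos α ≥ 0`, `u ≥ -1` give `‖u e^{iα} + 2‖ ≥ 1`, hence `‖w - 1‖ ≤ |u|`. A purely imaginary
power satisfies `‖w ^ s - 1‖ ≤ L ‖w - 1‖`: near `1` through `w ^ s = exp (s log w)`, far from `1`
because `‖w ^ s‖ ≤ exp (π |Im s|)`. The Gaussian factor has modulus `exp (-K t u²)` with
`K = 320 γ sin (2α) z₀⁵ > 0`, and `|u| exp (-K t u²) ≤ (K t)^{-1/2}`.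
-/

open Complex

lemma Real.abs_mul_exp_neg_mul_sq_le {K : ℝ} (hK : 0 < K) (u : ℝ) :
    |u| * Real.exp (-(K * u ^ 2)) ≤ (√K)⁻¹ := by
  have hy : √K * |u| ≤ Real.exp (K * u ^ 2) := by
    have hsq : (√K * |u|) ^ 2 = K * u ^ 2 := by rw [mul_pow, Real.sq_sqrt hK.le, sq_abs]
    nlinarith [Real.add_one_le_exp (K * u ^ 2), sq_nonneg (√K * |u| - 1)]
  rw [Real.exp_neg, ← div_eq_mul_inv, div_le_iff₀ (Real.exp_pos _)]
  rwa [le_inv_mul_iff₀ (Real.sqrt_pos.2 hK)]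

namespace Complex

lemma norm_cpow_le_exp_of_re_eq_zero {s : ℂ} (hs : s.re = 0) (w : ℂ) :
    ‖w ^ s‖ ≤ Real.exp (Real.pi * |s.im|) := by
  calc ‖w ^ s‖ ≤ ‖w‖ ^ s.re / Real.exp (arg w * s.im) := norm_cpow_le w s
    _ = Real.exp (-(arg w * s.im)) := by rw [hs, Real.rpow_zero, one_div, Real.exp_neg]
    _ ≤ Real.exp (Real.pi * |s.im|) := by
      gcongr
      calc -(arg w * s.im) ≤ |arg w| * |s.im| := by rw [← abs_mul]; exact neg_le_abs _
        _ ≤ Real.pi * |s.im| := by gcongr; exact abs_arg_le_pi w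

lemma norm_cpow_sub_one_le {s w : ℂ} (hw : ‖w - 1‖ ≤ 1 / 2)
    (hsw : 3 / 2 * ‖s‖ * ‖w - 1‖ ≤ 1) :
    ‖w ^ s - 1‖ ≤ 3 * ‖s‖ * ‖w - 1‖ := by
  have hw0 : w ≠ 0 := by
    rintro rfl
    norm_num at hw
  have hlog : ‖log w‖ ≤ 3 / 2 * ‖w - 1‖ := by
    simpa using norm_log_one_add_half_le_self hw
  have hexp : ‖log w * s‖ ≤ 3 / 2 * ‖s‖ * ‖w - 1‖ := by
    rw [norm_mul]; nlinarith [norm_nonneg s]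
  rw [cpow_def_of_ne_zero hw0]
  linarith [norm_exp_sub_one_le (hexp.trans hsw)]

lemma exists_norm_cpow_sub_one_le {s : ℂ} (hs : s.re = 0) :
    ∃ L > 0, ∀ w : ℂ, ‖w ^ s - 1‖ ≤ L * ‖w - 1‖ := by
  set B := Real.exp (Real.pi * |s.im|) + 1
  have hB : 0 < B := by positivity
  refine ⟨3 * ‖s‖ + B * (2 * ‖s‖ + 2), by positivity, fun w ↦ ?_⟩
  rcases le_or_gt (‖w - 1‖ * (2 * ‖s‖ + 2)) 1 with hsmall | hlarge
  · have hw : ‖w - 1‖ ≤ 1 / 2 := by nlinarith [norm_nonneg s, norm_nonneg (w - 1)]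
    calc ‖w ^ s - 1‖ ≤ 3 * ‖s‖ * ‖w - 1‖ :=
          norm_cpow_sub_one_le hw (by nlinarith [norm_nonneg s, norm_nonneg (w - 1)])
      _ ≤ _ := by gcongr; exact le_add_of_nonneg_right (by positivity)
  · calc ‖w ^ s - 1‖ ≤ ‖w ^ s‖ + ‖(1 : ℂ)‖ := norm_sub_le _ _
      _ ≤ B := by rw [norm_one]; linarith [norm_cpow_le_exp_of_re_eq_zero hs w]
      _ ≤ B * (‖w - 1‖ * (2 * ‖s‖ + 2)) := le_mul_of_one_le_right (by positivity) hlarge.le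
      _ ≤ _ := by nlinarith [norm_nonneg s, norm_nonneg (w - 1)]

lemma one_le_norm_ofReal_mul_add_two {e : ℂ} (he : ‖e‖ = 1) (hre : 0 ≤ e.re) {u : ℝ}
    (hu : -1 ≤ u) : 1 ≤ ‖u * e + 2‖ := by
  have hre1 : e.re ≤ 1 := he ▸ re_le_norm e
  have hmul : -1 ≤ u * e.re := by
    rcases le_total 0 u with h | h <;> nlinarith
  calc (1 : ℝ) ≤ (u * e + 2 : ℂ).re := by simp; linarith
    _ ≤ ‖u * e + 2‖ := re_le_norm _

lemma norm_two_div_ofReal_mul_add_two_sub_one_le {e : ℂ} (he : ‖e‖ = 1) (hre : 0 ≤ e.re)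
    {u : ℝ} (hu : -1 ≤ u) : ‖2 / (u * e + 2) - 1‖ ≤ |u| := by
  have hd := one_le_norm_ofReal_mul_add_two he hre hu
  have hd0 : (u * e + 2 : ℂ) ≠ 0 := norm_pos_iff.mp (by linarith)
  rw [div_sub_one hd0, show 2 - (u * e + 2) = -(u * e) by ring, norm_div, norm_neg, norm_mul,
    he, mul_one, norm_real, Real.norm_eq_abs]
  exact div_le_self (abs_nonneg u) hd

lemma norm_exp_I_mul_sq_div_two (γ c α : ℝ) :
    ‖exp (I * γ * (c * exp (I * α)) ^ 2 / 2)‖ =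
      Real.exp (-(γ * c ^ 2 * Real.sin (2 * α) / 2)) := by
  have hsq : (c * exp (I * α)) ^ 2 = (c ^ 2 : ℝ) * exp (I * (2 * α : ℝ)) := by
    rw [mul_pow, ← exp_nat_mul]; push_cast; ring_nf
  rw [norm_exp, hsq]
  congr 1
  simp [exp_re, exp_im, mul_re, mul_im, sq]
  ring

end Complex

theorem power_term_bound_general (ν α γ ε z₀ : ℝ)
    (hα : α ∈ Set.Ioo 0 (Real.pi / 2)) (hγ : γ ∈ Set.Ioo (0 : ℝ) (1 / 2))
    (hε : ε ∈ Set.Ioo (0 : ℝ) 1) (hz₀ : 0 < z₀) :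
    ∃ C > (0 : ℝ), ∀ t : ℝ, 0 < t → ∀ u : ℝ, -ε ≤ u →
      ‖Complex.exp (Complex.I * (γ : ℂ) *
            ((u : ℂ) * (z₀ : ℂ) * (Real.sqrt (640 * t * z₀ ^ 3) : ℂ) *
              Complex.exp (Complex.I * (α : ℂ))) ^ 2 / 2) *
          (((2 * (z₀ : ℂ)) /
              (((u : ℂ) * (z₀ : ℂ) * (Real.sqrt (640 * t * z₀ ^ 3) : ℂ) *
                  Complex.exp (Complex.I * (α : ℂ))) / (Real.sqrt (640 * t * z₀ ^ 3) : ℂ)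
                + 2 * (z₀ : ℂ))) ^ (-2 * Complex.I * (ν : ℂ)) - 1)‖
        ≤ C * t ^ (-(1 : ℝ) / 2) := by
  obtain ⟨L, hL, hLip⟩ := exists_norm_cpow_sub_one_le (s := -2 * I * ν) (by simp)
  set K := 320 * γ * Real.sin (2 * α) * z₀ ^ 5
  have hK : 0 < K := by
    have := Real.sin_pos_of_pos_of_lt_pi (x := 2 * α) (by linarith [hα.1]) (by linarith [hα.2])
    have := hγ.1
    positivity
  have he : ‖exp (I * α)‖ = 1 := by rw [mul_comm, norm_exp_ofReal_mul_I]
  have hre : 0 ≤ (exp (I * α)).re := by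
    rw [mul_comm, exp_ofReal_mul_I_re]
    exact Real.cos_nonneg_of_mem_Icc ⟨by linarith [hα.1, Real.pi_pos], hα.2.le⟩
  refine ⟨L * (√K)⁻¹, by positivity, fun t ht u hu ↦ ?_⟩
  set a := √(640 * t * z₀ ^ 3)
  have ha : 0 < a := Real.sqrt_pos.2 (by positivity)
  have hbase : 2 * (z₀ : ℂ) / (u * z₀ * a * exp (I * α) / a + 2 * z₀) =
      2 / (u * exp (I * α) + 2) := by
    have : (a : ℂ) ≠ 0 := ofReal_ne_zero.2 ha.ne'
    have : (z₀ : ℂ) ≠ 0 := ofReal_ne_zero.2 hz₀.ne'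
    field_simp
  have hgauss : ‖exp (I * γ * (u * z₀ * a * exp (I * α)) ^ 2 / 2)‖ =
      Real.exp (-(K * t * u ^ 2)) := by
    rw [show (u : ℂ) * z₀ * a * exp (I * α) = ((u * z₀ * a : ℝ) : ℂ) * exp (I * α) by
      push_cast; ring, norm_exp_I_mul_sq_div_two]
    congr 1
    rw [mul_pow, mul_pow, Real.sq_sqrt (by positivity)]
    ring
  have hdist := norm_two_div_ofReal_mul_add_two_sub_one_le he hre (by linarith [hε.2] : -1 ≤ u)
  rw [norm_mul, hbase, hgauss, neg_div, Real.rpow_neg ht.le, ← Real.sqrt_eq_rpow]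
  calc Real.exp (-(K * t * u ^ 2)) * ‖(2 / (u * exp (I * α) + 2)) ^ (-2 * I * ν) - 1‖
      ≤ Real.exp (-(K * t * u ^ 2)) * (L * |u|) := by gcongr; exact (hLip _).trans (by gcongr)
    _ = L * (|u| * Real.exp (-(K * t * u ^ 2))) := by ring
    _ ≤ L * (√(K * t))⁻¹ := by gcongr; exact Real.abs_mul_exp_neg_mul_sq_le (by positivity) u
    _ = L * (√K)⁻¹ * (√t)⁻¹ := by rw [Real.sqrt_mul hK.le, mul_inv, mul_assoc]

/-- For `z = u z₀ a e^{iα}` with `u ≥ −ε` and `a = (640 t z₀³)^{1/2}`, the quantity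
`|e^{iγz²/2}((2z₀/(z/a + 2z₀))^{−2iν} − 1)|` is bounded by `C t^{−1/2}`, where `C`
depends only on `ν, α, γ, ε, z₀` (principal branch of the complex power). -/
theorem power_term_bound (ν α γ ε z₀ : ℝ) (hν : 0 < ν)
    (hα : α ∈ Set.Ioo 0 (Real.pi / 2)) (hγ : γ ∈ Set.Ioo (0 : ℝ) (1 / 2))
    (hε : ε ∈ Set.Ioo (0 : ℝ) 1) (hz₀ : 0 < z₀) :
    ∃ C > (0 : ℝ), ∀ t : ℝ, 0 < t → ∀ u : ℝ, -ε ≤ u →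
      ‖Complex.exp (Complex.I * (γ : ℂ) *
            ((u : ℂ) * (z₀ : ℂ) * (Real.sqrt (640 * t * z₀ ^ 3) : ℂ) *
              Complex.exp (Complex.I * (α : ℂ))) ^ 2 / 2) *
          (((2 * (z₀ : ℂ)) /
              (((u : ℂ) * (z₀ : ℂ) * (Real.sqrt (640 * t * z₀ ^ 3) : ℂ) *
                  Complex.exp (Complex.I * (α : ℂ))) / (Real.sqrt (640 * t * z₀ ^ 3) : ℂ)
                + 2 * (z₀ : ℂ))) ^ (-2 * Complex.I * (ν : ℂ)) - 1)‖
        ≤ C * t ^ (-(1 : ℝ) / 2) :=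
  power_term_bound_general ν α γ ε z₀ hα hγ hε hz₀
end

section
/- For every α ∈ (0, π/5) and γ ∈ (0, 1/2) there exists ε_0 > 0 such that for all z_0 > 0, a > 0 and all real u ≥ −ε_0, setting z = u z_0 a e^{iα} and ξ(z) = 1 + (1−2γ)^{−1} ( z/(a z_0) + z^2/(2 a^2 z_0^2) + z^3/(10 a^3 z_0^3) ), one has Re( i (1−2γ) (z^2/2) ξ(z) ) ≤ 0, and consequently | exp( i (1−2γ) (z^2/2) ξ(z) ) | ≤ 1. -/
/-!
Writing `z = u z₀ a e^{iα}`, the exponent is `i (z₀ a)² / 2` times the real combination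
`(1 - 2γ) u² e^{2iα} + u³ e^{3iα} + u⁴/2 e^{4iα} + u⁵/10 e^{5iα}`, so its real part is
`-(z₀ a)²/2 · ((1 - 2γ) u² sin 2α + u³ sin 3α + u⁴/2 sin 4α + u⁵/10 sin 5α)`.
All four sines are positive for `α < π/5`, so the quintic is nonnegative for `u ≥ 0`, and for
small negative `u` the positive quadratic term dominates after factoring out `u²`.
-/

open Complex

lemma quintic_nonneg_of_neg_le {c s₃ s₄ s₅ u : ℝ} (hc : 0 ≤ c) (hs₃ : 0 ≤ s₃) (hs₃' : s₃ ≤ 1)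
    (hs₄ : 0 ≤ s₄) (hs₅ : 0 ≤ s₅) (hs₅' : s₅ ≤ 1) (hu : -min (c / 2) 1 ≤ u) :
    0 ≤ c * u ^ 2 + s₃ * u ^ 3 + s₄ / 2 * u ^ 4 + s₅ / 10 * u ^ 5 := by
  have hfactor : c * u ^ 2 + s₃ * u ^ 3 + s₄ / 2 * u ^ 4 + s₅ / 10 * u ^ 5
      = u ^ 2 * (c + s₃ * u + s₄ / 2 * u ^ 2 + s₅ / 10 * u ^ 3) := by ring
  rw [hfactor]
  refine mul_nonneg (sq_nonneg u) ?_
  rcases le_or_gt 0 u with hu0 | hu0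
  · positivity
  · have huc : -(c / 2) ≤ u := le_trans (neg_le_neg (min_le_left _ _)) hu
    have hu1 : -1 ≤ u := le_trans (neg_le_neg (min_le_right _ _)) hu
    -- for `u ∈ [-min (c/2) 1, 0]` the bracket is at least `c + 11 u / 10 ≥ 0`
    have h₃ : u ≤ s₃ * u := by nlinarith
    have hcube : u ≤ u ^ 3 := by nlinarith [mul_nonneg (neg_nonneg.mpr hu0.le) (sq_nonneg u)]
    have h₅ : u ^ 3 ≤ s₅ * u ^ 3 := by nlinarith [pow_pos (neg_pos.mpr hu0) 3]
    nlinarith [mul_nonneg hs₄ (sq_nonneg u)]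

lemma re_I_mul_ofReal_mul_exp_pow (c α : ℝ) (n : ℕ) :
    (I * c * exp (I * α) ^ n).re = -(c * Real.sin (n * α)) := by
  rw [← Complex.exp_nat_mul, show (n : ℂ) * (I * α) = ((n * α : ℝ) : ℂ) * I by push_cast; ring,
    mul_assoc, I_mul_re, im_ofReal_mul, exp_ofReal_mul_I_im]

lemma xi_exponent_eq {β z₀ a : ℝ} (hβ : β ≠ 0) (hz₀ : z₀ ≠ 0) (ha : a ≠ 0) (u : ℝ) (e : ℂ) :
    I * β * ((u * z₀ * a * e) ^ 2 / 2) *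
        (1 + (β : ℂ)⁻¹ * ((u * z₀ * a * e) / (a * z₀) + (u * z₀ * a * e) ^ 2 / (2 * a ^ 2 * z₀ ^ 2)
          + (u * z₀ * a * e) ^ 3 / (10 * a ^ 3 * z₀ ^ 3)))
      = I * ((z₀ * a) ^ 2 / 2 * β * u ^ 2 : ℝ) * e ^ 2 + I * ((z₀ * a) ^ 2 / 2 * u ^ 3 : ℝ) * e ^ 3
        + I * ((z₀ * a) ^ 2 / 2 * (u ^ 4 / 2) : ℝ) * e ^ 4
        + I * ((z₀ * a) ^ 2 / 2 * (u ^ 5 / 10) : ℝ) * e ^ 5 := by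
  have hβ' : (β : ℂ) ≠ 0 := ofReal_ne_zero.mpr hβ
  have hz₀' : (z₀ : ℂ) ≠ 0 := ofReal_ne_zero.mpr hz₀
  have ha' : (a : ℂ) ≠ 0 := ofReal_ne_zero.mpr ha
  push_cast
  field_simp
  ring

/-- For `α ∈ (0, π/5)` and `γ ∈ (0, 1/2)` there is `ε₀ > 0` such that for all `z₀, a > 0`
and `u ≥ −ε₀`, with `z = u z₀ a e^{iα}` and
`ξ(z) = 1 + (1−2γ)⁻¹(z/(az₀) + z²/(2a²z₀²) + z³/(10a³z₀³))`, one has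
`Re(i(1−2γ)(z²/2)ξ(z)) ≤ 0` and hence `|exp(i(1−2γ)(z²/2)ξ(z))| ≤ 1`. -/
theorem xi_exponent_bound (α γ : ℝ) (hα : α ∈ Set.Ioo 0 (Real.pi / 5))
    (hγ : γ ∈ Set.Ioo (0 : ℝ) (1 / 2)) :
    ∃ ε₀ > (0 : ℝ), ∀ (z₀ a : ℝ), 0 < z₀ → 0 < a → ∀ u : ℝ, -ε₀ ≤ u →
      (Complex.I * ((1 : ℂ) - 2 * (γ : ℂ)) *
          (((u : ℂ) * (z₀ : ℂ) * (a : ℂ) * Complex.exp (Complex.I * (α : ℂ))) ^ 2 / 2) *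
          (1 + ((1 : ℂ) - 2 * (γ : ℂ))⁻¹ *
            (((u : ℂ) * (z₀ : ℂ) * (a : ℂ) * Complex.exp (Complex.I * (α : ℂ))) / ((a : ℂ) * (z₀ : ℂ))
              + ((u : ℂ) * (z₀ : ℂ) * (a : ℂ) * Complex.exp (Complex.I * (α : ℂ))) ^ 2 /
                  (2 * (a : ℂ) ^ 2 * (z₀ : ℂ) ^ 2)
              + ((u : ℂ) * (z₀ : ℂ) * (a : ℂ) * Complex.exp (Complex.I * (α : ℂ))) ^ 3 /
                  (10 * (a : ℂ) ^ 3 * (z₀ : ℂ) ^ 3)))).re ≤ 0 ∧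
      ‖Complex.exp (Complex.I * ((1 : ℂ) - 2 * (γ : ℂ)) *
          (((u : ℂ) * (z₀ : ℂ) * (a : ℂ) * Complex.exp (Complex.I * (α : ℂ))) ^ 2 / 2) *
          (1 + ((1 : ℂ) - 2 * (γ : ℂ))⁻¹ *
            (((u : ℂ) * (z₀ : ℂ) * (a : ℂ) * Complex.exp (Complex.I * (α : ℂ))) / ((a : ℂ) * (z₀ : ℂ))
              + ((u : ℂ) * (z₀ : ℂ) * (a : ℂ) * Complex.exp (Complex.I * (α : ℂ))) ^ 2 /
                  (2 * (a : ℂ) ^ 2 * (z₀ : ℂ) ^ 2)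
              + ((u : ℂ) * (z₀ : ℂ) * (a : ℂ) * Complex.exp (Complex.I * (α : ℂ))) ^ 3 /
                  (10 * (a : ℂ) ^ 3 * (z₀ : ℂ) ^ 3))))‖ ≤ 1 := by
  obtain ⟨hα₀, hα₅⟩ := hα
  set β : ℝ := 1 - 2 * γ
  have hβ : 0 < β := by linarith [hγ.2]
  have hsin (k : ℝ) (hk : 0 < k) (hk₅ : k ≤ 5) : 0 < Real.sin (k * α) :=
    Real.sin_pos_of_pos_of_lt_pi (by positivity) (by nlinarith [Real.pi_pos])
  have hs₂ := hsin 2 two_pos (by norm_num)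
  refine ⟨min (β * Real.sin (2 * α) / 2) 1, lt_min (by positivity) one_pos, ?_⟩
  intro z₀ a hz₀ ha u hu
  rw [show (1 : ℂ) - 2 * γ = (β : ℂ) by push_cast [β]; ring]
  rw [xi_exponent_eq hβ.ne' hz₀.ne' ha.ne']
  set w := I * ((z₀ * a) ^ 2 / 2 * β * u ^ 2 : ℝ) * exp (I * α) ^ 2
    + I * ((z₀ * a) ^ 2 / 2 * u ^ 3 : ℝ) * exp (I * α) ^ 3
    + I * ((z₀ * a) ^ 2 / 2 * (u ^ 4 / 2) : ℝ) * exp (I * α) ^ 4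
    + I * ((z₀ * a) ^ 2 / 2 * (u ^ 5 / 10) : ℝ) * exp (I * α) ^ 5
  have hquintic := quintic_nonneg_of_neg_le (mul_pos hβ hs₂).le
    (hsin 3 three_pos (by norm_num)).le (Real.sin_le_one _) (hsin 4 four_pos (by norm_num)).le
    (hsin 5 (by norm_num) le_rfl).le (Real.sin_le_one _) hu
  have hw : w.re = -((z₀ * a) ^ 2 / 2 * (β * Real.sin (2 * α) * u ^ 2 + Real.sin (3 * α) * u ^ 3
      + Real.sin (4 * α) / 2 * u ^ 4 + Real.sin (5 * α) / 10 * u ^ 5)) := by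
    simp only [w, add_re, re_I_mul_ofReal_mul_exp_pow]
    push_cast
    ring
  have hre : w.re ≤ 0 := hw ▸ neg_nonpos.mpr (mul_nonneg (by positivity) hquintic)
  exact ⟨hre, by rw [Complex.norm_exp]; exact Real.exp_le_one_iff.mpr hre⟩
end
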